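/- On the 4-qubit singlet code, the operator X̄ = (1/√3)(E₂₃ - E₁₃) acts as the logical Pauli X: X̄ S⁰ = S¹ and X̄ S¹ = S⁰, and X̄ preserves the code subspace spanned by S⁰, S¹. -/

import Mathlib

open Matrix Kronecker

/-- Computational basis vector `|abcd⟩` of the 4-qubit space. -/
noncomputable def ket4 (a b c d : Fin 2) : Fin 2 × Fin 2 × Fin 2 × Fin 2 → ℂ :=
  fun x => if x = (a, b, c, d) then 1 else 0

noncomputable def pauliX : Matrix (Fin 2) (Fin 2) ℂ := !![0, 1; 1, 0]
noncomputable def pauliY : Matrix (Fin 2) (Fin 2) ℂ := !![0, -Complex.I; Complex.I, 0]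
noncomputable def pauliZ : Matrix (Fin 2) (Fin 2) ℂ := !![1, 0; 0, -1]

/-- Collective spin operator `S_α = Σᵢ σᵢ^α` on 4 qubits. -/
noncomputable def collOp4 (σ : Matrix (Fin 2) (Fin 2) ℂ) :
    Matrix (Fin 2 × Fin 2 × Fin 2 × Fin 2) (Fin 2 × Fin 2 × Fin 2 × Fin 2) ℂ :=
  σ ⊗ₖ ((1 : Matrix (Fin 2) (Fin 2) ℂ) ⊗ₖ ((1 : Matrix (Fin 2) (Fin 2) ℂ) ⊗ₖ (1 : Matrix (Fin 2) (Fin 2) ℂ))) +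
  (1 : Matrix (Fin 2) (Fin 2) ℂ) ⊗ₖ (σ ⊗ₖ ((1 : Matrix (Fin 2) (Fin 2) ℂ) ⊗ₖ (1 : Matrix (Fin 2) (Fin 2) ℂ))) +
  (1 : Matrix (Fin 2) (Fin 2) ℂ) ⊗ₖ ((1 : Matrix (Fin 2) (Fin 2) ℂ) ⊗ₖ (σ ⊗ₖ (1 : Matrix (Fin 2) (Fin 2) ℂ))) +
  (1 : Matrix (Fin 2) (Fin 2) ℂ) ⊗ₖ ((1 : Matrix (Fin 2) (Fin 2) ℂ) ⊗ₖ ((1 : Matrix (Fin 2) (Fin 2) ℂ) ⊗ₖ σ))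

/-- The 4-qubit singlet state `S⁰`. -/
noncomputable def S0 : Fin 2 × Fin 2 × Fin 2 × Fin 2 → ℂ :=
  (1 / 2 : ℂ) • (ket4 0 1 0 1 + ket4 1 0 1 0 - ket4 0 1 1 0 - ket4 1 0 0 1)

/-- The 4-qubit singlet state `S¹`. -/
noncomputable def S1 : Fin 2 × Fin 2 × Fin 2 × Fin 2 → ℂ :=
  (Real.sqrt 12 : ℂ)⁻¹ •
    ((2 : ℂ) • ket4 0 0 1 1 + (2 : ℂ) • ket4 1 1 0 0 -
      ket4 0 1 1 0 - ket4 1 0 0 1 - ket4 0 1 0 1 - ket4 1 0 1 0)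

/-- Swap of qubits 1 and 3 on the 4-qubit space. -/
noncomputable def E13 :
    Matrix (Fin 2 × Fin 2 × Fin 2 × Fin 2) (Fin 2 × Fin 2 × Fin 2 × Fin 2) ℂ :=
  Matrix.of fun p q => if q = (p.2.2.1, p.2.1, p.1, p.2.2.2) then 1 else 0

/-- Swap of qubits 2 and 3 on the 4-qubit space. -/
noncomputable def E23 :
    Matrix (Fin 2 × Fin 2 × Fin 2 × Fin 2) (Fin 2 × Fin 2 × Fin 2 × Fin 2) ℂ :=
  Matrix.of fun p q => if q = (p.1, p.2.2.1, p.2.1, p.2.2.2) then 1 else 0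

/-! Both swaps permute computational basis states, so on the six basis states occurring in `S⁰`
and `S¹` the operator `E₂₃ - E₁₃` is read off directly: it sends `S⁰ ↦ √3 S¹` and
`S¹ ↦ √3 S⁰`. Hence `X̄` exchanges the two generators of the code space and so preserves their
span. -/

theorem Matrix.mulVec_of_ite_eq {n R : Type*} [Fintype n] [DecidableEq n] [NonAssocSemiring R]
    (f : n → n) (v : n → R) :
    (of fun p q => if q = f p then (1 : R) else 0) *ᵥ v = v ∘ f := by
  funext p
  simp [mulVec, dotProduct]

theorem Matrix.mulVec_mem_span_of_forall_mem {m R : Type*} [Fintype m] [CommSemiring R]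
    {A : Matrix m m R} {s : Set (m → R)} (hs : ∀ x ∈ s, A *ᵥ x ∈ Submodule.span R s) :
    ∀ v ∈ Submodule.span R s, A *ᵥ v ∈ Submodule.span R s :=
  (Submodule.span_le (p := (Submodule.span R s).comap A.mulVecLin)).mpr hs

theorem E23_mulVec_ket4 (a b c d : Fin 2) : E23 *ᵥ ket4 a b c d = ket4 a c b d := by
  rw [E23, mulVec_of_ite_eq]
  funext ⟨p, q, r, t⟩
  simp only [ket4, Function.comp_apply, Prod.mk.injEq]
  congr 1
  grind

theorem E13_mulVec_ket4 (a b c d : Fin 2) : E13 *ᵥ ket4 a b c d = ket4 c b a d := by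
  rw [E13, mulVec_of_ite_eq]
  funext ⟨p, q, r, t⟩
  simp only [ket4, Function.comp_apply, Prod.mk.injEq]
  congr 1
  grind

theorem complex_sqrt_three_sq : (Real.sqrt 3 : ℂ) ^ 2 = 3 := by
  norm_cast
  simp

theorem complex_sqrt_three_ne_zero : (Real.sqrt 3 : ℂ) ≠ 0 := by
  exact_mod_cast (by positivity : Real.sqrt 3 ≠ 0)

theorem complex_sqrt_twelve_inv : ((Real.sqrt 12 : ℝ) : ℂ)⁻¹ = (Real.sqrt 3 : ℂ) / 6 := by
  have h : Real.sqrt 12 = 2 * Real.sqrt 3 := by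
    rw [show (12 : ℝ) = 2 ^ 2 * 3 by norm_num, Real.sqrt_mul (by norm_num),
      Real.sqrt_sq (by norm_num)]
  rw [h]
  push_cast
  field_simp [complex_sqrt_three_ne_zero]
  linear_combination -2 * complex_sqrt_three_sq

theorem E23_sub_E13_mulVec_S0 : (E23 - E13) *ᵥ S0 = (Real.sqrt 3 : ℂ) • S1 := by
  rw [S0, S1, complex_sqrt_twelve_inv]
  simp only [mulVec_smul, sub_mulVec, mulVec_add, mulVec_sub, E23_mulVec_ket4, E13_mulVec_ket4]
  match_scalars <;> ring_nf <;> simp only [complex_sqrt_three_sq] <;> norm_num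

theorem E23_sub_E13_mulVec_S1 : (E23 - E13) *ᵥ S1 = (Real.sqrt 3 : ℂ) • S0 := by
  rw [S0, S1, complex_sqrt_twelve_inv]
  simp only [mulVec_smul, sub_mulVec, mulVec_add, mulVec_sub, E23_mulVec_ket4, E13_mulVec_ket4]
  match_scalars <;> ring

/-- on the 4-qubit singlet code, `X̄ = (1/√3)(E₂₃ - E₁₃)` acts as the
logical Pauli `X`: it exchanges `S⁰` and `S¹` and preserves the code subspace. -/
theorem logical_X_four_qubit_dfs
    (Xbar : Matrix (Fin 2 × Fin 2 × Fin 2 × Fin 2) (Fin 2 × Fin 2 × Fin 2 × Fin 2) ℂ)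
    (hX : Xbar = (Real.sqrt 3 : ℂ)⁻¹ • (E23 - E13)) :
    Xbar.mulVec S0 = S1 ∧ Xbar.mulVec S1 = S0 ∧
    (∀ v ∈ (Submodule.span ℂ {S0, S1} :
        Submodule ℂ (Fin 2 × Fin 2 × Fin 2 × Fin 2 → ℂ)),
      Xbar.mulVec v ∈ (Submodule.span ℂ {S0, S1} :
        Submodule ℂ (Fin 2 × Fin 2 × Fin 2 × Fin 2 → ℂ))) := by
  have hS0 : Xbar *ᵥ S0 = S1 := by
    rw [hX, smul_mulVec, E23_sub_E13_mulVec_S0, inv_smul_smul₀ complex_sqrt_three_ne_zero]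
  have hS1 : Xbar *ᵥ S1 = S0 := by
    rw [hX, smul_mulVec, E23_sub_E13_mulVec_S1, inv_smul_smul₀ complex_sqrt_three_ne_zero]
  refine ⟨hS0, hS1, mulVec_mem_span_of_forall_mem ?_⟩
  rintro x (rfl | rfl)
  · rw [hS0]
    exact Submodule.subset_span (by simp)
  · rw [hS1]
    exact Submodule.subset_span (by simp)
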